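/- Let μ ∈ ℝ^p, let Σ ∈ ℝ^{p×p} be symmetric positive definite, and let q be the density of N(μ, Σ). Let M ∈ ℝ^{p×p} be symmetric and let S ∈ ℝ^{p×p} be a symmetric matrix solving the Sylvester equation SΣ + ΣS = M. Define Φ(x) := −(1/2)tr(SΣ) + (1/2)(x−μ)ᵀS(x−μ). Then: (i) E_q[Φ] = 0; and (ii) for all x ∈ ℝ^p, A(∇_x Φ)(x) = tr(S) − (x−μ)ᵀSΣ^{-1}(x−μ) = (1/2)tr(Σ^{-1}M) − (1/2)(x−μ)ᵀΣ^{-1}MΣ^{-1}(x−μ), which equals the negative of the directional derivative (d/dt)|_{t=0} log q_{μ,Σ+tM}(x) of the log-density in the covariance direction M. Hence Φ is the Wasserstein score function of the covariance parameter in direction M. -/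

import Mathlib

open MeasureTheory Real Matrix

/-- Partial derivative in the `i`-th coordinate. -/
noncomputable def pdv {n : ℕ} (i : Fin n) (f : (Fin n → ℝ) → ℝ) (x : Fin n → ℝ) : ℝ :=
  deriv (fun t => f (Function.update x i t)) (x i)

/-- Gradient of a scalar function on ℝ^n. -/
noncomputable def gradv {n : ℕ} (f : (Fin n → ℝ) → ℝ) (x : Fin n → ℝ) : Fin n → ℝ :=
  fun i => pdv i f x

/-- Divergence of a vector field on ℝ^n. -/
noncomputable def divv {n : ℕ} (f : (Fin n → ℝ) → (Fin n → ℝ)) (x : Fin n → ℝ) : ℝ :=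
  ∑ i, pdv i (fun y => f y i) x

/-- Divergence-based Stein operator `A_q f = div(q f) / q`. -/
noncomputable def stein {n : ℕ} (q : (Fin n → ℝ) → ℝ) (f : (Fin n → ℝ) → (Fin n → ℝ))
    (x : Fin n → ℝ) : ℝ :=
  divv (fun y i => q y * f y i) x / q x

/-- The density of the normal distribution `N(μ, Σ)` on ℝ^p. -/
noncomputable def gaussDens {p : ℕ} (μ : Fin p → ℝ) (Cov : Matrix (Fin p) (Fin p) ℝ)
    (x : Fin p → ℝ) : ℝ :=
  (2 * Real.pi) ^ (-(p : ℝ) / 2) * Cov.det ^ (-(1 : ℝ) / 2)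
    * Real.exp (-((x - μ) ⬝ᵥ (Cov⁻¹ *ᵥ (x - μ))) / 2)

/-!
With `v = x - μ`, the Gaussian score is `∇ log q = -Σ⁻¹ v` and `∇Φ = S v`, so
`A(∇Φ) = div ∇Φ + ⟨∇Φ, ∇ log q⟩ = tr S - vᵀ S Σ⁻¹ v`. Substituting `M = SΣ + ΣS` gives
`tr(Σ⁻¹M) = 2 tr S` and `Σ⁻¹MΣ⁻¹ = Σ⁻¹S + SΣ⁻¹`, which yields the second form; Jacobi's formula
`d/dt det(Σ + tM) = det Σ · tr(Σ⁻¹M)` and `d/dt (Σ + tM)⁻¹ = -Σ⁻¹MΣ⁻¹` identify it with the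
derivative of `-log q_{μ,Σ+tM}(x)`.

For `E_q[Φ] = 0`, write `Σ = R Rᵀ` and substitute `x = R u + μ`: the integral becomes a multiple of
`E[uᵀ B u] - tr B` with `B = Rᵀ S R` and `u` standard normal, which vanishes because
`E[u_i u_j] = δ_ij` (Fubini over the product density).
-/

theorem mulVec_dotProduct_mulVec {ι κ : Type*} [Fintype ι] [Fintype κ] (A B : Matrix κ ι ℝ)
    (u v : ι → ℝ) : (A *ᵥ u) ⬝ᵥ (B *ᵥ v) = u ⬝ᵥ (Aᵀ * B) *ᵥ v := by
  rw [← mulVec_mulVec, dotProduct_mulVec u, vecMul_transpose]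

section LineDerivatives

variable {ι κ : Type*} [Fintype ι] [Fintype κ] {f g : ℝ → ι → ℝ} {f' g' : ι → ℝ} {t : ℝ}

theorem HasDerivAt.dotProduct (hf : HasDerivAt f f' t) (hg : HasDerivAt g g' t) :
    HasDerivAt (fun s => f s ⬝ᵥ g s) (f' ⬝ᵥ g t + f t ⬝ᵥ g') t := by
  simp only [_root_.dotProduct, ← Finset.sum_add_distrib]
  exact HasDerivAt.fun_sum fun i _ => (hasDerivAt_pi.1 hf i).mul (hasDerivAt_pi.1 hg i)

theorem HasDerivAt.mulVec (A : Matrix κ ι ℝ) (hf : HasDerivAt f f' t) :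
    HasDerivAt (fun s => A *ᵥ f s) (A *ᵥ f') t :=
  (Matrix.mulVecLin A).toContinuousLinearMap.hasFDerivAt.comp_hasDerivAt t hf

end LineDerivatives

section PartialDerivatives

variable {n : ℕ}

theorem HasDerivAt.pdv_eq {i : Fin n} {f : (Fin n → ℝ) → ℝ} {x : Fin n → ℝ} {a : ℝ}
    (h : HasDerivAt (fun t => f (Function.update x i t)) a (x i)) : pdv i f x = a :=
  h.deriv

theorem hasDerivAt_update_sub_quadForm {A : Matrix (Fin n) (Fin n) ℝ} (hA : A.IsSymm)
    (μ x : Fin n → ℝ) (i : Fin n) :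
    HasDerivAt (fun t => (Function.update x i t - μ) ⬝ᵥ A *ᵥ (Function.update x i t - μ))
      (2 * (A *ᵥ (x - μ)) i) (x i) := by
  have h := (hasDerivAt_update x i (x i)).sub_const μ
  convert h.dotProduct (h.mulVec A) using 1
  rw [Function.update_eq_self, single_dotProduct, dotProduct_mulVec, dotProduct_single,
    ← hA.eq, vecMul_transpose, hA.eq]
  ring

end PartialDerivatives

section SteinOperator

variable {n : ℕ}

theorem gradv_const_add_half_quadForm {S : Matrix (Fin n) (Fin n) ℝ} (hS : S.IsSymm)
    (μ : Fin n → ℝ) (c : ℝ) (y : Fin n → ℝ) :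
    gradv (fun z => c + (1 / 2) * ((z - μ) ⬝ᵥ (S *ᵥ (z - μ)))) y = S *ᵥ (y - μ) := by
  funext i
  rw [gradv, (((hasDerivAt_update_sub_quadForm hS μ y i).const_mul (1 / 2)).const_add c).pdv_eq]
  ring

theorem gaussDens_pos {μ : Fin n → ℝ} {Cov : Matrix (Fin n) (Fin n) ℝ} (hCov : Cov.PosDef)
    (x : Fin n → ℝ) : 0 < gaussDens μ Cov x := by
  have := hCov.det_pos
  unfold gaussDens
  positivity

theorem hasDerivAt_gaussDens_update {μ : Fin n → ℝ} {Cov : Matrix (Fin n) (Fin n) ℝ}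
    (hCov : Cov.IsSymm) (x : Fin n → ℝ) (i : Fin n) :
    HasDerivAt (fun t => gaussDens μ Cov (Function.update x i t))
      (gaussDens μ Cov x * (-(Cov⁻¹ *ᵥ (x - μ))) i) (x i) := by
  have h : HasDerivAt (fun t => gaussDens μ Cov (Function.update x i t)) _ (x i) :=
    (((hasDerivAt_update_sub_quadForm hCov.inv μ x i).neg.div_const 2).exp).const_mul
      ((2 * π) ^ (-(n : ℝ) / 2) * Cov.det ^ (-(1 : ℝ) / 2))
  refine h.congr_deriv ?_
  simp only [gaussDens, Pi.neg_apply, Function.update_eq_self]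
  ring

/-- `A F = div F + ⟨F, ∇ log q⟩`, with `s` the score `∇ log q` and `d i = ∂ᵢ Fᵢ`. -/
theorem stein_eq_sum_add_dotProduct {q : (Fin n → ℝ) → ℝ} {F : (Fin n → ℝ) → Fin n → ℝ}
    {x s d : Fin n → ℝ} (hq : q x ≠ 0)
    (hqs : ∀ i, HasDerivAt (fun t => q (Function.update x i t)) (q x * s i) (x i))
    (hFd : ∀ i, HasDerivAt (fun t => F (Function.update x i t) i) (d i) (x i)) :
    stein q F x = ∑ i, d i + F x ⬝ᵥ s := by
  have hpdv : ∀ i, pdv i (fun y => q y * F y i) x = q x * (d i + F x i * s i) := fun i => by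
    rw [((hqs i).mul (hFd i)).pdv_eq, Function.update_eq_self]
    ring
  rw [stein, divv, Finset.sum_congr rfl fun i _ => hpdv i, ← Finset.mul_sum,
    mul_div_cancel_left₀ _ hq, Finset.sum_add_distrib, dotProduct]

theorem stein_gaussDens_mulVec_sub {μ : Fin n → ℝ} {Cov : Matrix (Fin n) (Fin n) ℝ}
    (hCovsym : Cov.IsSymm) (hCovpd : Cov.PosDef) (S : Matrix (Fin n) (Fin n) ℝ)
    (x : Fin n → ℝ) :
    stein (gaussDens μ Cov) (fun y => S *ᵥ (y - μ)) x
      = S.trace - (x - μ) ⬝ᵥ (Sᵀ * Cov⁻¹) *ᵥ (x - μ) := by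
  have hFd : ∀ i, HasDerivAt (fun t => (S *ᵥ (Function.update x i t - μ)) i) (S i i) (x i) :=
    fun i => by
      simpa [mulVec_single] using
        hasDerivAt_pi.1 (((hasDerivAt_update x i (x i)).sub_const μ).mulVec S) i
  rw [stein_eq_sum_add_dotProduct (gaussDens_pos hCovpd x).ne'
    (hasDerivAt_gaussDens_update hCovsym x) hFd, dotProduct_neg, mulVec_dotProduct_mulVec, trace,
    sub_eq_add_neg]
  rfl

end SteinOperator

section Sylvester

variable {ι : Type*} [Fintype ι] [DecidableEq ι] {Cov S : Matrix ι ι ℝ}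

theorem trace_inv_mul_sylvester (hCov : IsUnit Cov.det) :
    (Cov⁻¹ * (S * Cov + Cov * S)).trace = 2 * S.trace := by
  rw [Matrix.mul_add, trace_add, ← Matrix.mul_assoc, trace_mul_cycle, ← Matrix.mul_assoc,
    nonsing_inv_mul _ hCov, mul_nonsing_inv _ hCov, Matrix.one_mul, two_mul]

theorem inv_mul_sylvester_mul_inv (hCov : IsUnit Cov.det) :
    Cov⁻¹ * (S * Cov + Cov * S) * Cov⁻¹ = Cov⁻¹ * S + S * Cov⁻¹ := by
  rw [Matrix.mul_add, Matrix.add_mul, Matrix.mul_assoc, Matrix.mul_assoc S,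
    mul_nonsing_inv _ hCov, ← Matrix.mul_assoc Cov⁻¹ Cov, nonsing_inv_mul _ hCov,
    Matrix.mul_one, Matrix.one_mul]

theorem trace_sub_quadForm_mul_inv_eq_sylvester (hCovsym : Cov.IsSymm) (hCov : IsUnit Cov.det)
    (hS : S.IsSymm) (v : ι → ℝ) :
    S.trace - v ⬝ᵥ (S * Cov⁻¹) *ᵥ v
      = (1 / 2) * (Cov⁻¹ * (S * Cov + Cov * S)).trace
        - (1 / 2) * (v ⬝ᵥ (Cov⁻¹ * (S * Cov + Cov * S) * Cov⁻¹) *ᵥ v) := by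
  have hswap : v ⬝ᵥ (Cov⁻¹ * S) *ᵥ v = v ⬝ᵥ (S * Cov⁻¹) *ᵥ v := by
    rw [← dotProduct_transpose_mulVec, transpose_mul, hCovsym.inv.eq, hS.eq]
  rw [trace_inv_mul_sylvester hCov, inv_mul_sylvester_mul_inv hCov, add_mulVec, dotProduct_add,
    hswap]
  ring

end Sylvester

section CovarianceDerivative

open Filter Polynomial Topology

variable {ι : Type*} [Fintype ι] [DecidableEq ι]

theorem hasDerivAt_det_one_add_smul (M : Matrix ι ι ℝ) :
    HasDerivAt (fun t : ℝ => (1 + t • M).det) M.trace 0 := by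
  have h := (det (1 + (X : ℝ[X]) • M.map C)).hasDerivAt 0
  rw [derivative_det_one_add_X_smul] at h
  refine h.congr_of_eventuallyEq (Eventually.of_forall fun t => ?_)
  simp [eval_det, ← smul_eq_mul_diagonal]

theorem hasDerivAt_det_add_smul {A : Matrix ι ι ℝ} (hA : IsUnit A.det) (M : Matrix ι ι ℝ) :
    HasDerivAt (fun t : ℝ => (A + t • M).det) (A.det * (A⁻¹ * M).trace) 0 := by
  have hfac : ∀ t : ℝ, A + t • M = A * (1 + t • (A⁻¹ * M)) := fun t => by
    rw [Matrix.mul_add, Matrix.mul_one, Matrix.mul_smul, ← Matrix.mul_assoc,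
      mul_nonsing_inv _ hA, Matrix.one_mul]
  simp only [hfac, det_mul]
  exact (hasDerivAt_det_one_add_smul _).const_mul _

section MatrixNorm

attribute [local instance] Matrix.linftyOpNormedAddCommGroup Matrix.linftyOpNormedRing
  Matrix.linftyOpNormedAlgebra

theorem hasDerivAt_inv_add_smul {A : Matrix ι ι ℝ} (hA : IsUnit A.det) (M : Matrix ι ι ℝ) :
    HasDerivAt (fun t : ℝ => (A + t • M)⁻¹) (-(A⁻¹ * M * A⁻¹)) 0 := by
  obtain ⟨u, hu⟩ := (isUnit_iff_isUnit_det A).2 hA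
  have hline : HasDerivAt (fun t : ℝ => A + t • M) M 0 := by
    have h := ((hasDerivAt_id' (0 : ℝ)).smul_const M).const_add A
    rw [one_smul] at h
    -- not `simpa`: `h` uses the operator-norm instances, the goal those of `Matrix`, which agree
    -- only up to unfolding
    exact h
  have hinv : HasFDerivAt Ring.inverse (-(ContinuousLinearMap.mulLeftRight ℝ _ A⁻¹ A⁻¹))
      (A + (0 : ℝ) • M) := by
    simpa [← hu, coe_units_inv] using hasFDerivAt_ringInverse (𝕜 := ℝ) u
  have h := hinv.comp_hasDerivAt 0 hline
  simp only [Function.comp_def, ← nonsing_inv_eq_ringInverse] at h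
  refine h.congr_deriv ?_
  simp

theorem hasDerivAt_quadForm_inv_add_smul {A : Matrix ι ι ℝ} (hA : IsUnit A.det)
    (M : Matrix ι ι ℝ) (v : ι → ℝ) :
    HasDerivAt (fun t : ℝ => v ⬝ᵥ (A + t • M)⁻¹ *ᵥ v) (-(v ⬝ᵥ (A⁻¹ * M * A⁻¹) *ᵥ v)) 0 := by
  let quadForm : Matrix ι ι ℝ →ₗ[ℝ] ℝ :=
    { toFun := fun B => v ⬝ᵥ B *ᵥ v
      map_add' := fun B C => by simp [add_mulVec, dotProduct_add]
      map_smul' := fun c B => by simp [smul_mulVec, dotProduct_smul] }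
  have h : HasDerivAt (fun t : ℝ => v ⬝ᵥ (A + t • M)⁻¹ *ᵥ v) _ 0 :=
    quadForm.toContinuousLinearMap.hasFDerivAt.comp_hasDerivAt 0 (hasDerivAt_inv_add_smul hA M)
  refine h.congr_deriv ?_
  change v ⬝ᵥ (-(A⁻¹ * M * A⁻¹)) *ᵥ v = _
  rw [neg_mulVec, dotProduct_neg]

end MatrixNorm

theorem hasDerivAt_log_gaussDens_add_smul {p : ℕ} (μ : Fin p → ℝ)
    {Cov : Matrix (Fin p) (Fin p) ℝ} (hCov : Cov.PosDef) (M : Matrix (Fin p) (Fin p) ℝ)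
    (x : Fin p → ℝ) :
    HasDerivAt (fun t : ℝ => Real.log (gaussDens μ (Cov + t • M) x))
      ((1 / 2) * ((x - μ) ⬝ᵥ (Cov⁻¹ * M * Cov⁻¹) *ᵥ (x - μ)) - (1 / 2) * (Cov⁻¹ * M).trace)
      0 := by
  have hunit : IsUnit Cov.det := hCov.det_pos.ne'.isUnit
  have hdet := hasDerivAt_det_add_smul hunit M
  have hpos : ∀ᶠ t : ℝ in 𝓝 0, 0 < (Cov + t • M).det :=
    hdet.continuousAt.eventually (lt_mem_nhds (by simpa using hCov.det_pos))
  have hlog : (fun t : ℝ => Real.log (gaussDens μ (Cov + t • M) x)) =ᶠ[𝓝 0] fun t =>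
      Real.log ((2 * π) ^ (-(p : ℝ) / 2)) + (-(1 : ℝ) / 2) * Real.log (Cov + t • M).det
        - ((x - μ) ⬝ᵥ (Cov + t • M)⁻¹ *ᵥ (x - μ)) / 2 := by
    filter_upwards [hpos] with t ht
    rw [gaussDens, Real.log_mul (by positivity) (Real.exp_ne_zero _),
      Real.log_mul (by positivity) (by positivity), Real.log_exp, Real.log_rpow ht]
    ring
  have h := (((hdet.log (by simpa using hCov.det_pos.ne')).const_mul (-(1 : ℝ) / 2)).const_add
    (Real.log ((2 * π) ^ (-(p : ℝ) / 2)))).sub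
    ((hasDerivAt_quadForm_inv_add_smul hunit M (x - μ)).div_const 2)
  refine (h.congr_of_eventuallyEq hlog).congr_deriv ?_
  rw [zero_smul, add_zero]
  field_simp [hCov.det_pos.ne']
  ring

end CovarianceDerivative

section GaussianReal

open ProbabilityTheory

variable {m : ℝ} {v : NNReal}

theorem integral_gaussianPDFReal_mul (hv : v ≠ 0) (g : ℝ → ℝ) :
    ∫ t, gaussianPDFReal m v t * g t = ∫ t, g t ∂gaussianReal m v :=
  (integral_gaussianReal_eq_integral_smul hv).symm

theorem integrable_gaussianPDFReal_mul (hv : v ≠ 0) {g : ℝ → ℝ}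
    (hg : Integrable g (gaussianReal m v)) :
    Integrable fun t => gaussianPDFReal m v t * g t := by
  rw [gaussianReal_of_var_ne_zero _ hv, integrable_withDensity_iff_integrable_smul'
    (measurable_gaussianPDF _ _) (ae_of_all _ fun _ => gaussianPDF_lt_top)] at hg
  simpa [toReal_gaussianPDF] using hg

theorem integrable_mul_self_gaussianReal : Integrable (fun t : ℝ => t * t) (gaussianReal m v) := by
  simpa [sq] using (memLp_id_gaussianReal 2).integrable_sq

theorem integral_mul_self_gaussianReal_zero : ∫ t, t * t ∂gaussianReal 0 v = v := by
  have h := variance_of_integral_eq_zero (X := fun t : ℝ => t) aemeasurable_id'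
    (integral_id_gaussianReal (μ := 0) (v := v))
  rw [variance_fun_id_gaussianReal] at h
  simpa [sq] using h.symm

end GaussianReal

section StandardGaussianPDF

open ProbabilityTheory

variable {ι : Type*} [Fintype ι]

noncomputable def stdGaussianPDF (u : ι → ℝ) : ℝ := ∏ k, gaussianPDFReal 0 1 (u k)

theorem stdGaussianPDF_eq (u : ι → ℝ) :
    stdGaussianPDF u = (2 * π) ^ (-(Fintype.card ι : ℝ) / 2) * Real.exp (-(u ⬝ᵥ u) / 2) := by
  have hpow : (√(2 * π))⁻¹ ^ Fintype.card ι = (2 * π) ^ (-(Fintype.card ι : ℝ) / 2) := by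
    rw [Real.sqrt_eq_rpow, ← Real.rpow_neg (by positivity), ← Real.rpow_mul_natCast
      (by positivity)]
    ring_nf
  simp only [stdGaussianPDF, gaussianPDFReal, Finset.prod_mul_distrib, Finset.prod_const,
    Finset.card_univ, ← Real.exp_sum, dotProduct, NNReal.coe_one, mul_one, sub_zero, hpow]
  congr 2
  rw [← Finset.sum_div, ← Finset.sum_neg_distrib]
  simp [sq]

theorem integral_stdGaussianPDF : ∫ u : ι → ℝ, stdGaussianPDF u = 1 := by
  simp [stdGaussianPDF, integral_fintype_prod_volume_eq_pow,
    integral_gaussianPDFReal_eq_one 0 one_ne_zero]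

theorem integrable_stdGaussianPDF : Integrable (stdGaussianPDF (ι := ι)) :=
  Integrable.fintype_prod fun _ => integrable_gaussianPDFReal 0 1

end StandardGaussianPDF

section StandardGaussianMoments

open ProbabilityTheory

variable {ι : Type*} [Fintype ι] [DecidableEq ι]

theorem stdGaussianPDF_mul_mul_eq_prod (i j : ι) (u : ι → ℝ) :
    stdGaussianPDF u * (u i * u j) = ∏ k, gaussianPDFReal 0 1 (u k) *
      ((if k = i then u k else 1) * (if k = j then u k else 1)) := by
  simp only [stdGaussianPDF, Finset.prod_mul_distrib, Finset.prod_ite_eq', Finset.mem_univ,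
    if_true]

theorem integrable_stdGaussianPDF_mul_mul (i j : ι) :
    Integrable fun u : ι → ℝ => stdGaussianPDF u * (u i * u j) := by
  simp_rw [stdGaussianPDF_mul_mul_eq_prod]
  refine Integrable.fintype_prod (f := fun k t => gaussianPDFReal 0 1 t *
    ((if k = i then t else 1) * (if k = j then t else 1)))
    fun k => integrable_gaussianPDFReal_mul one_ne_zero ?_
  split_ifs <;> simp [IsGaussian.integrable_fun_id, integrable_mul_self_gaussianReal]

theorem integral_stdGaussianPDF_mul_mul (i j : ι) :
    ∫ u : ι → ℝ, stdGaussianPDF u * (u i * u j) = if i = j then 1 else 0 := by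
  simp_rw [stdGaussianPDF_mul_mul_eq_prod]
  rw [integral_fintype_prod_volume_eq_prod (fun k t => gaussianPDFReal 0 1 t *
    ((if k = i then t else 1) * (if k = j then t else 1)))]
  simp_rw [integral_gaussianPDFReal_mul one_ne_zero]
  split_ifs with hij
  · subst hij
    refine Finset.prod_eq_one fun k _ => ?_
    split_ifs <;> simp [integral_mul_self_gaussianReal_zero]
  · refine Finset.prod_eq_zero (Finset.mem_univ i) ?_
    simp [hij, integral_id_gaussianReal]

theorem integral_stdGaussianPDF_mul_quadForm_sub_trace (B : Matrix ι ι ℝ) :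
    ∫ u : ι → ℝ, stdGaussianPDF u * (u ⬝ᵥ B *ᵥ u - B.trace) = 0 := by
  have hexpand : ∀ u : ι → ℝ, stdGaussianPDF u * (u ⬝ᵥ B *ᵥ u - B.trace)
      = ∑ i, ∑ j, B i j * (stdGaussianPDF u * (u i * u j)) - B.trace * stdGaussianPDF u :=
    fun u => by
      simp only [dotProduct, mulVec, mul_sub, Finset.mul_sum]
      congr 1
      · exact Finset.sum_congr rfl fun i _ => Finset.sum_congr rfl fun j _ => by ring
      · ring
  have hint : ∀ i j, Integrable fun u : ι → ℝ => B i j * (stdGaussianPDF u * (u i * u j)) :=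
    fun i j => (integrable_stdGaussianPDF_mul_mul i j).const_mul _
  simp_rw [hexpand]
  rw [integral_sub (integrable_finsetSum _ fun i _ => integrable_finsetSum _ fun j _ => hint i j)
      (integrable_stdGaussianPDF.const_mul _), integral_finsetSum _ fun i _ =>
      integrable_finsetSum _ fun j _ => hint i j]
  simp_rw [integral_finsetSum _ fun j _ => hint _ j, integral_const_mul,
    integral_stdGaussianPDF_mul_mul, integral_stdGaussianPDF]
  simp [trace]

end StandardGaussianMoments

section Whitening

variable {ι : Type*} [Fintype ι] [DecidableEq ι]

theorem integral_eq_abs_det_mul_integral_mulVec_add {A : Matrix ι ι ℝ} (hA : A.det ≠ 0)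
    (b : ι → ℝ) (f : (ι → ℝ) → ℝ) :
    ∫ x, f x = |A.det| * ∫ u, f (A *ᵥ u + b) := by
  let e : (ι → ℝ) ≃ᵐ (ι → ℝ) := (toLinearEquiv' A (A.invertibleOfIsUnitDet
    hA.isUnit)).toContinuousLinearEquiv.toHomeomorph.toMeasurableEquiv
  have hmap : Measure.map e volume = ENNReal.ofReal |A.det⁻¹| • volume :=
    Real.map_matrix_volume_pi_eq_smul_volume_pi hA
  have hcomp := integral_map_equiv (μ := volume) e fun y => f (y + b)
  rw [hmap, integral_smul_measure, ENNReal.toReal_ofReal (abs_nonneg _), smul_eq_mul,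
    integral_add_right_eq_self] at hcomp
  change _ = ∫ u, f (A *ᵥ u + b) at hcomp
  rw [← hcomp, abs_inv, mul_inv_cancel_left₀ (abs_ne_zero.2 hA)]

theorem Matrix.PosSemidef.exists_mul_transpose_eq {Cov : Matrix ι ι ℝ} (hCov : Cov.PosSemidef) :
    ∃ R : Matrix ι ι ℝ, R * Rᵀ = Cov := by
  open scoped MatrixOrder in
  obtain ⟨B, hB⟩ := CStarAlgebra.nonneg_iff_eq_star_mul_self.mp hCov.nonneg
  exact ⟨Bᵀ, by
    rw [hB, transpose_transpose, star_eq_conjTranspose, conjTranspose_eq_transpose_of_trivial]⟩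

theorem gaussDens_mulVec_add {p : ℕ} (μ : Fin p → ℝ) {Cov R : Matrix (Fin p) (Fin p) ℝ}
    (hR : R * Rᵀ = Cov) (hRdet : R.det ≠ 0) (u : Fin p → ℝ) :
    gaussDens μ Cov (R *ᵥ u + μ) = Cov.det ^ (-(1 : ℝ) / 2) * stdGaussianPDF u := by
  have hwhite : Rᵀ * Cov⁻¹ * R = 1 := by
    rw [← hR, Matrix.mul_inv_rev, ← Matrix.mul_assoc, mul_nonsing_inv _
      (by simpa using hRdet.isUnit), Matrix.one_mul, nonsing_inv_mul _ hRdet.isUnit]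
  have hquad : (R *ᵥ u) ⬝ᵥ Cov⁻¹ *ᵥ (R *ᵥ u) = u ⬝ᵥ u := by
    rw [mulVec_mulVec, mulVec_dotProduct_mulVec, ← Matrix.mul_assoc, hwhite, one_mulVec]
  rw [gaussDens, add_sub_cancel_right, hquad, stdGaussianPDF_eq, Fintype.card_fin]
  ring

end Whitening

theorem integral_gaussDens_mul_quadForm_sub_trace {p : ℕ} (μ : Fin p → ℝ)
    {Cov : Matrix (Fin p) (Fin p) ℝ} (hCov : Cov.PosDef) (S : Matrix (Fin p) (Fin p) ℝ) :
    ∫ x, gaussDens μ Cov x * ((x - μ) ⬝ᵥ S *ᵥ (x - μ) - (S * Cov).trace) = 0 := by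
  obtain ⟨R, hR⟩ := hCov.posSemidef.exists_mul_transpose_eq
  have hRdet : R.det ≠ 0 := fun h => hCov.det_pos.ne' (by rw [← hR, det_mul, h, zero_mul])
  have hwhite : ∀ u, gaussDens μ Cov (R *ᵥ u + μ) *
      ((R *ᵥ u + μ - μ) ⬝ᵥ S *ᵥ (R *ᵥ u + μ - μ) - (S * Cov).trace)
      = Cov.det ^ (-(1 : ℝ) / 2) *
        (stdGaussianPDF u * (u ⬝ᵥ (Rᵀ * S * R) *ᵥ u - (Rᵀ * S * R).trace)) := fun u => by
    have htrace : (S * Cov).trace = (Rᵀ * S * R).trace := by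
      rw [← hR, ← Matrix.mul_assoc, trace_mul_comm, Matrix.mul_assoc]
    rw [gaussDens_mulVec_add μ hR hRdet, add_sub_cancel_right, mulVec_mulVec,
      mulVec_dotProduct_mulVec, ← Matrix.mul_assoc, htrace]
    ring
  rw [integral_eq_abs_det_mul_integral_mulVec_add hRdet μ]
  simp_rw [hwhite]
  rw [integral_const_mul, integral_stdGaussianPDF_mul_quadForm_sub_trace, mul_zero, mul_zero]

theorem stmt13 {p : ℕ} (μ : Fin p → ℝ) (Cov M S : Matrix (Fin p) (Fin p) ℝ)
    (hCovsym : Cov.IsSymm) (hCovpd : Cov.PosDef) (hSsym : S.IsSymm)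
    (hSyl : S * Cov + Cov * S = M) :
    (∫ x, gaussDens μ Cov x *
        (-(1 / 2) * (S * Cov).trace + (1 / 2) * ((x - μ) ⬝ᵥ (S *ᵥ (x - μ)))) = 0)
    ∧ ∀ x : Fin p → ℝ,
        (stein (gaussDens μ Cov)
            (fun y => gradv (fun z =>
              -(1 / 2) * (S * Cov).trace + (1 / 2) * ((z - μ) ⬝ᵥ (S *ᵥ (z - μ)))) y) x
          = S.trace - (x - μ) ⬝ᵥ ((S * Cov⁻¹) *ᵥ (x - μ)))
        ∧ (S.trace - (x - μ) ⬝ᵥ ((S * Cov⁻¹) *ᵥ (x - μ))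
          = (1 / 2) * (Cov⁻¹ * M).trace
            - (1 / 2) * ((x - μ) ⬝ᵥ ((Cov⁻¹ * M * Cov⁻¹) *ᵥ (x - μ))))
        ∧ ((1 / 2) * (Cov⁻¹ * M).trace
            - (1 / 2) * ((x - μ) ⬝ᵥ ((Cov⁻¹ * M * Cov⁻¹) *ᵥ (x - μ)))
          = - deriv (fun t : ℝ => Real.log (gaussDens μ (Cov + t • M) x)) 0) := by
  subst hSyl
  refine ⟨?_, fun x => ⟨?_, ?_, ?_⟩⟩
  · have h := integral_gaussDens_mul_quadForm_sub_trace μ hCovpd S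
    rw [← mul_zero (1 / 2 : ℝ), ← h, ← integral_const_mul]
    congr 1 with x
    ring
  · simp_rw [gradv_const_add_half_quadForm hSsym]
    rw [stein_gaussDens_mulVec_sub hCovsym hCovpd, hSsym.eq]
  · exact trace_sub_quadForm_mul_inv_eq_sylvester hCovsym hCovpd.det_pos.ne'.isUnit hSsym _
  · rw [(hasDerivAt_log_gaussDens_add_smul μ hCovpd _ x).deriv]
    ring
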